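/- arXiv:1406.0120 — 3 statements merged into one kernel-verified Lean document; each statement's English description precedes it below -/
import Mathlib

section
/- Let K be a number field of degree [K:ℚ] ≥ 2, with unit rank r_K, and let r_0 be the maximum of the unit ranks of the proper subfields of K. Then r_K = r_0 if and only if K is a CM field. -/
/-!
If a proper subfield `K₀ ⊊ K` has the same unit rank as `K`, then `K₀` and `K` have equally many
infinite places, so restricting places from `K` to `K₀` is a bijection. Each place `v` of `K₀`
then has a single place `w` above it, while the places above `v` account for all
`[K : K₀] ≥ 2` embeddings of `K` extending a fixed embedding of `K₀`. This forces `w` to be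
complex over a real `v`, and `[K : K₀] = 2`: `K₀` is totally real and `K` totally imaginary.
Conversely, a totally real `K₀` with `[K : K₀] = 2` in a totally imaginary `K` has
`#places(K₀) = [K₀ : ℚ] = [K : ℚ] / 2 = #places(K)`.
-/

/-- A CM field is a totally imaginary quadratic extension of a totally real field:
`K` has no real embeddings and contains a subfield `K₀` all of whose complex embeddings
are real such that `[K : K₀] = 2`. -/
def IsCMField (K : Type*) [Field K] : Prop :=
  (∀ φ : K →+* ℂ, ¬ NumberField.ComplexEmbedding.IsReal φ) ∧
  ∃ K₀ : Subfield K, (∀ φ : K₀ →+* ℂ, NumberField.ComplexEmbedding.IsReal φ) ∧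
    Module.finrank K₀ K = 2

/-- The maximum of the unit ranks of the proper subfields of a number field `K`.
(In characteristic zero every subfield of `K` contains `ℚ`, so proper subfields are
the intermediate fields of `K/ℚ` other than `K` itself.) -/
noncomputable def maxProperSubfieldUnitRank (K : Type*) [Field K] [NumberField K] : ℕ :=
  sSup {n : ℕ | ∃ K₀ : IntermediateField ℚ K, K₀ ≠ ⊤ ∧ n = NumberField.Units.rank K₀}

open NumberField hiding IsCMField
open InfinitePlace Module

theorem IntermediateField.two_le_finrank_of_ne_top {F E : Type*} [Field F] [Field E]
    [Algebra F E] [FiniteDimensional F E] {K₀ : IntermediateField F E} (h : K₀ ≠ ⊤) :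
    2 ≤ finrank K₀ E := by
  have := finrank_pos (R := K₀) (M := E)
  have := mt finrank_eq_one_iff_eq_top.mp h
  omega

namespace NumberField

theorem isTotallyReal_iff_forall_isReal (F : Type*) [Field F] :
    IsTotallyReal F ↔ ∀ φ : F →+* ℂ, ComplexEmbedding.IsReal φ :=
  ⟨fun _ ↦ IsTotallyReal.complexEmbedding_isReal, fun h ↦ ⟨fun _ ↦ isReal_iff.mpr (h _)⟩⟩

theorem isTotallyComplex_iff_forall_not_isReal (F : Type*) [Field F] :
    IsTotallyComplex F ↔ ∀ φ : F →+* ℂ, ¬ ComplexEmbedding.IsReal φ :=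
  ⟨fun _ ↦ IsTotallyComplex.complexEmbedding_not_isReal, fun h ↦
    ⟨fun _ ↦ not_isReal_iff_isComplex.mp fun hw ↦ h _ (isReal_iff.mp hw)⟩⟩

namespace InfinitePlace

variable {k K : Type*} [Field k] [Field K] [Algebra k K] [NumberField k] [NumberField K]

theorem isRamified_and_finrank_eq_two_of_card_eq_card
    (hcard : Fintype.card (InfinitePlace k) = Fintype.card (InfinitePlace K))
    (hdeg : 2 ≤ finrank k K) (w : InfinitePlace K) :
    w.IsRamified k ∧ finrank k K = 2 := by
  set v := w.comap (algebraMap k K)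
  have hw : w.LiesOver v := ⟨rfl⟩
  have hinj : Function.Injective fun w : InfinitePlace K ↦ w.comap (algebraMap k K) :=
    ((Fintype.bijective_iff_surjective_and_card _).mpr ⟨comap_surjective, hcard.symm⟩).injective
  have hover : placesOver K v = {w} := by
    ext w'
    exact ⟨fun (_ : w'.LiesOver v) ↦ hinj (LiesOver.comap_eq w' v), fun h ↦ h ▸ hw⟩
  have hunion := union_ramifiedPlacesOver_unramifiedPlacesOver K v
  have hcount := Set.ncard_union_eq (disjoint_ramifiedPlacesOver_unramifiedPlacesOver K v)
  rw [hunion, hover, Set.ncard_singleton] at hcount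
  have hdegree := unramifedPlacesOver_ncard_add_eq_finrank K v
  have hunram : unramifiedPlacesOver K v = ∅ := (Set.ncard_eq_zero).mp (by omega)
  have hmem : w ∈ ramifiedPlacesOver K v ∪ unramifiedPlacesOver K v := by simp [hunion, hover]
  rw [hunram, Set.union_empty] at hmem
  exact ⟨hmem.2, by omega⟩

theorem card_eq_card_of_isTotallyReal_of_isTotallyComplex [IsTotallyReal k] [IsTotallyComplex K]
    (hdeg : finrank k K = 2) :
    Fintype.card (InfinitePlace k) = Fintype.card (InfinitePlace K) := by
  have htower := finrank_mul_finrank ℚ k K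
  rw [hdeg] at htower
  have hk := IsTotallyReal.finrank (K := k)
  have hK := IsTotallyComplex.finrank (K := K)
  rw [card_eq_nrRealPlaces_add_nrComplexPlaces, card_eq_nrRealPlaces_add_nrComplexPlaces,
    IsTotallyReal.nrComplexPlaces_eq_zero, IsTotallyComplex.nrRealPlaces_eq_zero K]
  omega

theorem card_eq_card_iff (hdeg : 2 ≤ finrank k K) :
    Fintype.card (InfinitePlace k) = Fintype.card (InfinitePlace K) ↔
      IsTotallyReal k ∧ IsTotallyComplex K ∧ finrank k K = 2 := by
  refine ⟨fun hcard ↦ ?_, fun ⟨_, _, h⟩ ↦ card_eq_card_of_isTotallyReal_of_isTotallyComplex h⟩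
  have hram := isRamified_and_finrank_eq_two_of_card_eq_card hcard hdeg
  refine ⟨⟨fun v ↦ ?_⟩, ⟨fun w ↦ (hram w).1.isComplex⟩, (hram (Classical.arbitrary _)).2⟩
  obtain ⟨w, rfl⟩ := comap_surjective (K := K) v
  exact (hram w).1.isReal

end InfinitePlace

theorem Units.rank_le_rank (k K : Type*) [Field k] [Field K] [Algebra k K] [NumberField k]
    [NumberField K] : Units.rank k ≤ Units.rank K :=
  Nat.sub_le_sub_right (card_mono k K) 1

theorem Units.rank_eq_rank_iff {k K : Type*} [Field k] [Field K] [NumberField k] [NumberField K] :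
    Units.rank k = Units.rank K ↔
      Fintype.card (InfinitePlace k) = Fintype.card (InfinitePlace K) := by
  have : 0 < Fintype.card (InfinitePlace k) := Fintype.card_pos
  have : 0 < Fintype.card (InfinitePlace K) := Fintype.card_pos
  rw [Units.rank, Units.rank]
  omega

end NumberField

section maxProperSubfieldUnitRank

variable (K : Type*) [Field K] [NumberField K]

theorem unitRank_mem_upperBounds_properSubfieldUnitRanks :
    Units.rank K ∈
      upperBounds {n : ℕ | ∃ K₀ : IntermediateField ℚ K, K₀ ≠ ⊤ ∧ n = Units.rank K₀} := by
  rintro n ⟨K₀, -, rfl⟩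
  exact Units.rank_le_rank K₀ K

theorem unitRank_eq_maxProperSubfieldUnitRank_iff (hd : 2 ≤ finrank ℚ K) :
    Units.rank K = maxProperSubfieldUnitRank K ↔
      ∃ K₀ : IntermediateField ℚ K, K₀ ≠ ⊤ ∧ Units.rank K₀ = Units.rank K := by
  have hub := unitRank_mem_upperBounds_properSubfieldUnitRanks K
  constructor
  · intro h
    have hbot : (⊥ : IntermediateField ℚ K) ≠ ⊤ := by
      rw [Ne, IntermediateField.bot_eq_top_iff_finrank_eq_one]
      omega
    obtain ⟨K₀, hK₀, hrank⟩ := Nat.sSup_mem (by exact ⟨_, ⊥, hbot, rfl⟩) ⟨_, hub⟩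
    exact ⟨K₀, hK₀, hrank ▸ h.symm⟩
  · rintro ⟨K₀, hK₀, hrank⟩
    exact le_antisymm (le_csSup ⟨_, hub⟩ ⟨K₀, hK₀, hrank.symm⟩) (csSup_le' hub)

end maxProperSubfieldUnitRank

theorem isCMField_iff (K : Type*) [Field K] [CharZero K] :
    IsCMField K ↔ IsTotallyComplex K ∧
      ∃ K₀ : IntermediateField ℚ K, IsTotallyReal K₀ ∧ finrank K₀ K = 2 := by
  rw [IsCMField, isTotallyComplex_iff_forall_not_isReal]
  refine and_congr_right fun _ ↦ ⟨?_, ?_⟩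
  · rintro ⟨K₀, hreal, hdeg⟩
    have hrat (q : ℚ) : algebraMap ℚ K q ∈ K₀ := by
      rw [eq_ratCast]
      exact SubfieldClass.ratCast_mem K₀ q
    exact ⟨K₀.toIntermediateField hrat, (isTotallyReal_iff_forall_isReal _).mpr hreal, hdeg⟩
  · rintro ⟨K₀, hreal, hdeg⟩
    exact ⟨K₀.toSubfield, (isTotallyReal_iff_forall_isReal _).mp hreal, hdeg⟩

/-- For a number field `K` of degree at least `2`, the unit rank of `K` equals the maximum
of the unit ranks of the proper subfields of `K` if and only if `K` is a CM field. -/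
theorem unitRank_eq_maxProperSubfieldUnitRank_iff_isCMField
    (K : Type*) [Field K] [NumberField K] (hd : 2 ≤ Module.finrank ℚ K) :
    NumberField.Units.rank K = maxProperSubfieldUnitRank K ↔ IsCMField K := by
  rw [unitRank_eq_maxProperSubfieldUnitRank_iff K hd, isCMField_iff]
  constructor
  · rintro ⟨K₀, hK₀, hrank⟩
    obtain ⟨hreal, hcomplex, hdeg⟩ :=
      (card_eq_card_iff (K₀.two_le_finrank_of_ne_top hK₀)).mp (Units.rank_eq_rank_iff.mp hrank)
    exact ⟨hcomplex, K₀, hreal, hdeg⟩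
  · rintro ⟨_, K₀, _, hdeg⟩
    refine ⟨K₀, ?_, Units.rank_eq_rank_iff.mpr
      (card_eq_card_of_isTotallyReal_of_isTotallyComplex hdeg)⟩
    rintro rfl
    simp at hdeg
end

section
/- Let K be a number field and let K_0 be a proper subfield of K (K_0 ≠ K) such that r_1(K) + r_2(K) = r_1(K_0) + r_2(K_0). Then [K:K_0] = 2, r_1(K) = 0 (i.e. K is totally imaginary), and r_2(K_0) = 0 (i.e. K_0 is totally real). -/
/-!
With `n = [K:ℚ] = r₁(K) + 2 r₂(K)` and `n₀ = [K₀:ℚ] = r₁(K₀) + 2 r₂(K₀)`, properness gives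
`2 n₀ ≤ n`, while `n ≤ 2 (r₁(K) + r₂(K)) = 2 (r₁(K₀) + r₂(K₀)) ≤ 2 n₀`. Hence every inequality in
the chain is an equality: `n = 2 n₀`, `r₁(K) = 0` and `r₂(K₀) = 0`.
-/

open NumberField.InfinitePlace

theorem IntermediateField.one_lt_finrank_of_ne_top {F E : Type*} [Field F] [Field E] [Algebra F E]
    {L : IntermediateField F E} [FiniteDimensional L E] (h : L ≠ ⊤) : 1 < Module.finrank L E :=
  lt_of_le_of_ne' Module.finrank_pos (mt finrank_eq_one_iff_eq_top.mp h)

theorem IntermediateField.two_mul_finrank_le_of_ne_top {F E : Type*} [Field F] [Field E]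
    [Algebra F E] [FiniteDimensional F E] {L : IntermediateField F E} (h : L ≠ ⊤) :
    2 * Module.finrank F L ≤ Module.finrank F E := by
  rw [← Module.finrank_mul_finrank F L E, mul_comm]
  exact Nat.mul_le_mul_left _ (one_lt_finrank_of_ne_top h)

/-- Let `K` be a number field and `K₀` a proper subfield of `K` (every subfield of `K`
contains `ℚ` since `K` has characteristic zero) such that
`r₁(K) + r₂(K) = r₁(K₀) + r₂(K₀)`. Then `[K : K₀] = 2`, `K` is totally imaginary
(`r₁(K) = 0`) and `K₀` is totally real (`r₂(K₀) = 0`). -/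
theorem eq_ranks_of_proper_subfield
    (K : Type*) [Field K] [NumberField K] (K₀ : IntermediateField ℚ K) (hne : K₀ ≠ ⊤)
    (h : nrRealPlaces K + nrComplexPlaces K = nrRealPlaces K₀ + nrComplexPlaces K₀) :
    Module.finrank K₀ K = 2 ∧ nrRealPlaces K = 0 ∧ nrComplexPlaces K₀ = 0 := by
  have hK := card_add_two_mul_card_eq_rank K
  have hK₀ := card_add_two_mul_card_eq_rank K₀
  have hdeg := IntermediateField.two_mul_finrank_le_of_ne_top hne
  obtain ⟨hn, hr₁, hr₂⟩ : Module.finrank ℚ K = 2 * Module.finrank ℚ K₀ ∧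
      nrRealPlaces K = 0 ∧ nrComplexPlaces K₀ = 0 := by
    omega
  refine ⟨?_, hr₁, hr₂⟩
  rw [← Module.finrank_mul_finrank ℚ K₀ K, mul_comm] at hn
  exact Nat.eq_of_mul_eq_mul_right Module.finrank_pos hn
end

section
/- For every complex number τ with Im τ ≥ √3/2, setting q = e^{2πiτ}, one has |q · ∏_{n=1}^∞ (1 − q^n)^{24}| · (2·Im τ)^6 ≤ 1. In other words, the modular discriminant Δ(τ) = q·∏_{n=1}^∞(1−q^n)^{24} satisfies |Δ(τ)|·(2·Im τ)^6 ≤ 1 whenever Im τ ≥ √3/2. -/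
open Complex

/-!
Write `y = Im τ` and `r = |q| = e^{-2πy}`. Bounding every factor by `|1 - q^n| ≤ 1 + r^n ≤ e^{r^n}` gives
`|Δ(τ)| ≤ r · exp (24 r / (1 - r))`. For `Im τ ≥ √3/2` we have `r ≤ e^{-5} < 1/100`, so the
exponential factor is at most `e^{1/4}`, while `y^6 ≤ e^{6y - 6}` and `2π > 6` make
`r · (2y)^6 ≤ 64 e^{-6}`; altogether `|Δ(τ)| (2y)^6 ≤ 64 e^{-23/4} < 1`.
-/

section TprodBound

variable {ι R : Type*} [NormedCommRing R] [NormOneClass R]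

lemma norm_tprod_le_exp_tsum {f : ι → R} {g : ι → ℝ} (hg : Summable g) (hg0 : ∀ i, 0 ≤ g i)
    (hfg : ∀ i, ‖f i‖ ≤ Real.exp (g i)) : ‖∏' i, f i‖ ≤ Real.exp (∑' i, g i) := by
  by_cases hf : Multipliable f
  · refine le_of_tendsto' ((continuous_norm.tendsto _).comp hf.hasProd) fun s ↦ ?_
    calc ‖∏ i ∈ s, f i‖ ≤ ∏ i ∈ s, ‖f i‖ := Finset.norm_prod_le _ _
      _ ≤ ∏ i ∈ s, Real.exp (g i) :=
          Finset.prod_le_prod (fun i _ ↦ norm_nonneg _) fun i _ ↦ hfg i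
      _ = Real.exp (∑ i ∈ s, g i) := (Real.exp_sum _ _).symm
      _ ≤ Real.exp (∑' i, g i) := Real.exp_le_exp.mpr (hg.sum_le_tsum s fun i _ ↦ hg0 i)
  · rw [tprod_eq_one_of_not_multipliable hf, norm_one]
    exact Real.one_le_exp (tsum_nonneg hg0)

lemma norm_tprod_one_sub_pow_succ_pow_le {q : R} (hq : ‖q‖ < 1) (k : ℕ) :
    ‖∏' n : ℕ, (1 - q ^ (n + 1)) ^ k‖ ≤ Real.exp (k * (‖q‖ / (1 - ‖q‖))) := by
  set r := ‖q‖
  have hr0 : 0 ≤ r := norm_nonneg q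
  have hgeom : HasSum (fun n : ℕ ↦ r ^ (n + 1)) (r / (1 - r)) := by
    simpa only [pow_succ', div_eq_mul_inv] using
      (hasSum_geometric_of_lt_one hr0 hq).mul_left r
  have hfactor (n : ℕ) : ‖(1 - q ^ (n + 1)) ^ k‖ ≤ Real.exp (k * r ^ (n + 1)) :=
    calc ‖(1 - q ^ (n + 1)) ^ k‖ ≤ (1 + r ^ (n + 1)) ^ k := by
          refine (norm_pow_le _ _).trans (pow_le_pow_left₀ (norm_nonneg _) ?_ k)
          exact (norm_sub_le _ _).trans (by rw [norm_one]; gcongr; exact norm_pow_le _ _)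
      _ ≤ Real.exp (r ^ (n + 1)) ^ k := by
          gcongr
          linarith [Real.add_one_le_exp (r ^ (n + 1))]
      _ = Real.exp (k * r ^ (n + 1)) := (Real.exp_nat_mul _ _).symm
  rw [← (hgeom.mul_left (k : ℝ)).tsum_eq]
  exact norm_tprod_le_exp_tsum (hgeom.mul_left (k : ℝ)).summable (fun n ↦ by positivity) hfactor

end TprodBound

lemma norm_exp_two_pi_I_mul (τ : ℂ) :
    ‖Complex.exp (2 * Real.pi * I * τ)‖ = Real.exp (-(2 * Real.pi * τ.im)) := by
  simpa [Function.Periodic.qParam, neg_mul] using Function.Periodic.norm_qParam 1 τ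

lemma Real.exp_neg_five_lt : Real.exp (-5) < 1 / 100 := by
  have h100 : (100 : ℝ) < Real.exp 5 :=
    calc (100 : ℝ) < 2.7182818283 ^ 5 := by norm_num
      _ < Real.exp 1 ^ 5 := by gcongr; exact Real.exp_one_gt_d9
      _ = Real.exp 5 := by rw [← Real.exp_nat_mul]; norm_num
  rw [Real.exp_neg, one_div]
  exact inv_strictAnti₀ (by norm_num) h100

lemma Real.pow_le_exp_mul_sub_one {y : ℝ} (hy : 0 ≤ y) (n : ℕ) :
    y ^ n ≤ Real.exp (n * (y - 1)) := by
  rw [Real.exp_nat_mul]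
  gcongr
  linarith [Real.add_one_le_exp (y - 1)]

lemma exp_neg_two_pi_mul_le_exp_neg_five {y : ℝ} (hy : Real.sqrt 3 / 2 ≤ y) :
    Real.exp (-(2 * Real.pi * y)) ≤ Real.exp (-5) := by
  have hsqrt3 : (1.7 : ℝ) ≤ Real.sqrt 3 := Real.le_sqrt_of_sq_le (by norm_num)
  rw [Real.exp_le_exp]
  nlinarith [Real.pi_gt_d2]

lemma exp_neg_two_pi_mul_mul_exp_mul_pow_le_one {y : ℝ} (hy : Real.sqrt 3 / 2 ≤ y) :
    let r := Real.exp (-(2 * Real.pi * y))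
    r * Real.exp (24 * (r / (1 - r))) * (2 * y) ^ 6 ≤ 1 := by
  intro r
  have hr : r < 1 / 100 := (exp_neg_two_pi_mul_le_exp_neg_five hy).trans_lt Real.exp_neg_five_lt
  have hy0 : 0 ≤ y := le_trans (by positivity) hy
  have hexp : 24 * (r / (1 - r)) ≤ 1 / 4 := by
    rw [mul_div_assoc', div_le_iff₀ (by linarith)]
    linarith
  have hpi : 6 * y ≤ 2 * Real.pi * y := by nlinarith [Real.pi_gt_three]
  calc r * Real.exp (24 * (r / (1 - r))) * (2 * y) ^ 6
      ≤ r * Real.exp (1 / 4) * (2 ^ 6 * Real.exp (6 * (y - 1))) := by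
        rw [mul_pow]
        gcongr
        exact_mod_cast Real.pow_le_exp_mul_sub_one hy0 6
    _ = 64 * Real.exp (-(2 * Real.pi * y) + 6 * y - 23 / 4) := by
        simp only [r, mul_comm (2 ^ 6 : ℝ), ← mul_assoc, ← Real.exp_add]
        ring_nf
    _ ≤ 64 * Real.exp (-5) := by gcongr; linarith
    _ ≤ 1 := by linarith [Real.exp_neg_five_lt]

/-- For every `τ` in the upper half-plane with `Im τ ≥ √3/2`, the modular discriminant
`Δ(τ) = q·∏_{n ≥ 1}(1 - q^n)^24`, where `q = e^(2πiτ)`, satisfies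
`|Δ(τ)| · (2·Im τ)^6 ≤ 1`. -/
theorem abs_modular_discriminant_mul_le_one (τ : ℂ) (hτ : Real.sqrt 3 / 2 ≤ τ.im) :
    ‖Complex.exp (2 * Real.pi * I * τ) *
        ∏' n : ℕ, (1 - Complex.exp (2 * Real.pi * I * τ) ^ (n + 1)) ^ (24 : ℕ)‖ *
      (2 * τ.im) ^ (6 : ℕ) ≤ 1 := by
  have hq := norm_exp_two_pi_I_mul τ
  have hq1 : ‖Complex.exp (2 * Real.pi * I * τ)‖ < 1 := by
    rw [hq, Real.exp_lt_one_iff, neg_lt_zero]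
    exact mul_pos Real.two_pi_pos (lt_of_lt_of_le (by positivity) hτ)
  have hprod := norm_tprod_one_sub_pow_succ_pow_le hq1 24
  rw [hq] at hprod
  refine le_trans ?_ (exp_neg_two_pi_mul_mul_exp_mul_pow_le_one hτ)
  rw [norm_mul, hq]
  gcongr
  exact_mod_cast hprod
end
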